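/- Under the assumptions of the logarithmic equi-confounding bias bound — consistency (Yᵢ = Yᵢ⁽⁰⁾ almost surely for i = 2, …, J+1); logarithmic equi-confounding E[Y₁⁽⁰⁾]/E[Σ_{i=2}^{J+1} Yᵢ⁽⁰⁾] = E[F₁]/E[Σ_{i=2}^{J+1} Fᵢ]; Yᵢ⁽⁰⁾ ∈ [l_y, L_y] and Fᵢ ∈ [l_f, L_f] almost surely with 0 < l_y, 0 < l_f; (1/J²)·Σ_{i ≠ j, 2 ≤ i,j ≤ J+1} |Cov(Fᵢ, Fⱼ)| ≤ τ; and |Cov(F₁ / ((1/J)·Σ_{i=2}^{J+1} Fᵢ), (1/J)·Σ_{i=2}^{J+1} Yᵢ)| ≤ C — suppose in addition that (1/J)·Σ_{i=2}^{J+1} |Cov(F₁, Fᵢ)| ≤ τ₁ for a constant τ₁ ≥ 0. Let Δ_f = L_f − l_f and ψ̂ᵉᑫ² = Y₁ − (F₁ / Σ_{i=2}^{J+1} Fᵢ) · Σ_{i=2}^{J+1} Yᵢ. Then |E[ψ̂ᵉᑫ²] − ψ₀| ≤ L_y · ( τ₁/l_f² + ((Δ_f + L_f)/l_f³) · (Δ_f²/(4J)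 + τ) ) + C. -/

import Mathlib

/-!
Write `F̄` and `Ȳ` for the averages of `F` and `Y` over the control units. The estimator is
`Y₁ - (F₁ / F̄) * Ȳ`, and equi-confounding together with consistency gives
`E[Y₁⁽⁰⁾] = (E[F₁] / E[F̄]) * E[Ȳ]`, so the bias equals
`(E[F₁] / E[F̄] - E[F₁ / F̄]) * E[Ȳ] - Cov(F₁ / F̄, Ȳ)`.
With `m = E[Φ]`, the exact expansion `m² * G / Φ = 2 m G - G Φ + (G / Φ) (Φ - m)²` gives
`|E[G] / E[Φ] - E[G / Φ]| ≤ |Cov(G, Φ)| / a² + c * Var(Φ) / a³` whenever `|G| ≤ c` and `Φ ≥ a > 0`.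
For `G = F₁`, `Φ = F̄`, bilinearity bounds `|Cov(F₁, F̄)|` by `τ₁`, and Popoviciu's inequality on
the diagonal terms of `Var(F̄)` bounds it by `Δ_f² / (4J) + τ`.
-/

open MeasureTheory ProbabilityTheory

/-- Covariance of two real random variables: `Cov(U, V) = E[UV] − E[U]·E[V]`. -/
noncomputable def covar {Ω : Type*} [MeasureSpace Ω] (U V : Ω → ℝ) : ℝ :=
  (∫ ω, U ω * V ω) - (∫ ω, U ω) * (∫ ω, V ω)

/-- Variance of a real random variable: `Var(U) = Cov(U, U)`. -/
noncomputable def var {Ω : Type*} [MeasureSpace Ω] (U : Ω → ℝ) : ℝ := covar U U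

open Finset

theorem div_mul_left_mul_mul_left {K : Type*} [Field K] {c : K} (hc : c ≠ 0) (a b d : K) :
    a / (c * b) * (c * d) = a / b * d := by
  rw [div_mul_eq_mul_div, mul_left_comm, mul_div_mul_left _ _ hc, mul_div_right_comm]

theorem div_sum_mul_sum_eq_div_average_mul_average {ι : Type*} {s : Finset ι} (hs : s.Nonempty)
    (a : ℝ) (x y : ι → ℝ) :
    a / (∑ i ∈ s, x i) * ∑ i ∈ s, y i
      = a / (1 / (#s : ℝ) * ∑ i ∈ s, x i) * (1 / (#s : ℝ) * ∑ i ∈ s, y i) :=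
  (div_mul_left_mul_mul_left (one_div_ne_zero (Nat.cast_ne_zero.2 hs.card_pos.ne')) _ _ _).symm

namespace ProbabilityTheory

variable {Ω : Type*} {mΩ : MeasurableSpace Ω} {μ : Measure Ω} [IsProbabilityMeasure μ]

section Ratio

variable {G Φ : Ω → ℝ} {a c : ℝ}

omit [IsProbabilityMeasure μ] in
theorem ae_norm_div_le (hGc : ∀ᵐ ω ∂μ, |G ω| ≤ c) (ha : 0 < a)
    (hΦa : ∀ᵐ ω ∂μ, a ≤ Φ ω) : ∀ᵐ ω ∂μ, ‖G ω / Φ ω‖ ≤ c / a := by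
  filter_upwards [hGc, hΦa] with ω hg hφ
  rw [Real.norm_eq_abs, abs_div, abs_of_pos (ha.trans_le hφ)]
  exact div_le_div₀ ((abs_nonneg _).trans hg) hg ha hφ

theorem sq_integral_mul_integral_div (hG : AEStronglyMeasurable G μ)
    (hGc : ∀ᵐ ω ∂μ, |G ω| ≤ c) (hΦ : MemLp Φ 2 μ) (ha : 0 < a) (hΦa : ∀ᵐ ω ∂μ, a ≤ Φ ω) :
    μ[Φ] ^ 2 * ∫ ω, G ω / Φ ω ∂μ
      = μ[Φ] * μ[G] - cov[G, Φ; μ] + ∫ ω, G ω / Φ ω * (Φ ω - μ[Φ]) ^ 2 ∂μ := by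
  set m := μ[Φ]
  have hGint : Integrable G μ := .of_bound hG c hGc
  have hGΦ : Integrable (fun ω ↦ G ω * Φ ω) μ := hΦ.integrable one_le_two |>.bdd_mul hG hGc
  have hR : AEStronglyMeasurable (fun ω ↦ G ω / Φ ω) μ :=
    (hG.aemeasurable.div hΦ.aemeasurable).aestronglyMeasurable
  have hT : Integrable (fun ω ↦ G ω / Φ ω * (Φ ω - m) ^ 2) μ :=
    (hΦ.sub (memLp_const m)).integrable_sq.bdd_mul hR (ae_norm_div_le hGc ha hΦa)
  calc m ^ 2 * ∫ ω, G ω / Φ ω ∂μ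
      = ∫ ω, 2 * m * G ω - G ω * Φ ω + G ω / Φ ω * (Φ ω - m) ^ 2 ∂μ := by
        rw [← integral_const_mul]
        refine integral_congr_ae ?_
        filter_upwards [hΦa] with ω hφ
        have : Φ ω ≠ 0 := (ha.trans_le hφ).ne'
        field_simp
        ring
    _ = 2 * m * μ[G] - μ[G * Φ] + ∫ ω, G ω / Φ ω * (Φ ω - m) ^ 2 ∂μ := by
        have h2mG : Integrable (fun ω ↦ 2 * m * G ω) μ := hGint.const_mul _
        have hsub : Integrable (fun ω ↦ 2 * m * G ω - G ω * Φ ω) μ := h2mG.sub hGΦ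
        rw [integral_add hsub hT, integral_sub h2mG hGΦ, integral_const_mul]
        rfl
    _ = m * μ[G] - cov[G, Φ; μ] + ∫ ω, G ω / Φ ω * (Φ ω - m) ^ 2 ∂μ := by
        rw [covariance_eq_sub (memLp_of_bounded (a := -c) (b := c) _ hG 2) hΦ]
        · ring
        · filter_upwards [hGc] with ω h using abs_le.1 h

theorem abs_integral_div_integral_sub_integral_div_le (hG : AEStronglyMeasurable G μ)
    (hGc : ∀ᵐ ω ∂μ, |G ω| ≤ c) (hΦ : MemLp Φ 2 μ) (ha : 0 < a) (hΦa : ∀ᵐ ω ∂μ, a ≤ Φ ω) :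
    |μ[G] / μ[Φ] - ∫ ω, G ω / Φ ω ∂μ|
      ≤ |cov[G, Φ; μ]| / a ^ 2 + c * Var[Φ; μ] / a ^ 3 := by
  set m := μ[Φ]
  set T := ∫ ω, G ω / Φ ω * (Φ ω - m) ^ 2 ∂μ
  have hma : a ≤ m := by
    simpa using integral_mono_ae (integrable_const a) (hΦ.integrable one_le_two) hΦa
  have hm : 0 < m := ha.trans_le hma
  have hT : |T| ≤ c / a * Var[Φ; μ] := by
    rw [variance_eq_integral hΦ.aemeasurable, ← integral_const_mul, ← Real.norm_eq_abs]
    refine norm_integral_le_of_norm_le ((hΦ.sub (memLp_const m)).integrable_sq.const_mul _) ?_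
    filter_upwards [ae_norm_div_le hGc ha hΦa] with ω h
    rw [norm_mul, norm_pow, Real.norm_eq_abs (Φ ω - m), sq_abs]
    exact mul_le_mul_of_nonneg_right h (sq_nonneg _)
  have hD : m ^ 2 * (μ[G] / m - ∫ ω, G ω / Φ ω ∂μ) = cov[G, Φ; μ] - T := by
    have hmG : m ^ 2 * (μ[G] / m) = m * μ[G] := by field_simp
    rw [mul_sub, hmG, sq_integral_mul_integral_div hG hGc hΦ ha hΦa]
    ring
  have hnum : |cov[G, Φ; μ] - T| ≤ |cov[G, Φ; μ]| + c / a * Var[Φ; μ] :=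
    (abs_sub _ _).trans (add_le_add_right hT _)
  calc |μ[G] / m - ∫ ω, G ω / Φ ω ∂μ| = |cov[G, Φ; μ] - T| / m ^ 2 := by
        rw [← hD, abs_mul, abs_of_pos (pow_pos hm 2), mul_div_cancel_left₀ _ (pow_pos hm 2).ne']
    _ ≤ (|cov[G, Φ; μ]| + c / a * Var[Φ; μ]) / a ^ 2 :=
        div_le_div₀ ((abs_nonneg _).trans hnum) hnum (pow_pos ha 2) (pow_le_pow_left₀ ha.le hma 2)
    _ = |cov[G, Φ; μ]| / a ^ 2 + c * Var[Φ; μ] / a ^ 3 := by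
        field_simp

end Ratio

section Averages

variable {ι : Type*} {s : Finset ι} {X : ι → Ω → ℝ} {l L : ℝ}

omit [IsProbabilityMeasure μ] in
theorem ae_average_mem_Icc (hs : s.Nonempty) (hX : ∀ i ∈ s, ∀ᵐ ω ∂μ, X i ω ∈ Set.Icc l L) :
    ∀ᵐ ω ∂μ, 1 / (#s : ℝ) * ∑ i ∈ s, X i ω ∈ Set.Icc l L := by
  filter_upwards [(Filter.eventually_all_finset s).2 hX] with ω h
  rw [one_div_mul_eq_div, ← expect_eq_sum_div_card]
  exact ⟨le_expect hs fun i hi ↦ (h i hi).1, expect_le hs fun i hi ↦ (h i hi).2⟩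

theorem variance_fun_sum_le [DecidableEq ι] (hXm : ∀ i ∈ s, AEStronglyMeasurable (X i) μ)
    (hX : ∀ i ∈ s, ∀ᵐ ω ∂μ, X i ω ∈ Set.Icc l L) :
    Var[fun ω ↦ ∑ i ∈ s, X i ω; μ]
      ≤ #s * ((L - l) / 2) ^ 2 + ∑ i ∈ s, ∑ j ∈ s.erase i, |cov[X i, X j; μ]| := by
  rw [variance_fun_sum' fun i hi ↦ memLp_of_bounded (hX i hi) (hXm i hi) 2]
  calc ∑ i ∈ s, ∑ j ∈ s, cov[X i, X j; μ]
      = ∑ i ∈ s, (Var[X i; μ] + ∑ j ∈ s.erase i, cov[X i, X j; μ]) := by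
        refine sum_congr rfl fun i hi ↦ ?_
        rw [← covariance_self (hXm i hi).aemeasurable]
        exact (add_sum_erase _ _ hi).symm
    _ ≤ ∑ i ∈ s, (((L - l) / 2) ^ 2 + ∑ j ∈ s.erase i, |cov[X i, X j; μ]|) := by
        gcongr with i hi j
        · exact variance_le_sq_of_bounded (hX i hi) (hXm i hi).aemeasurable
        · exact le_abs_self _
    _ = #s * ((L - l) / 2) ^ 2 + ∑ i ∈ s, ∑ j ∈ s.erase i, |cov[X i, X j; μ]| := by
        rw [sum_add_distrib, sum_const, nsmul_eq_mul]

theorem variance_average_le [DecidableEq ι] (hXm : ∀ i ∈ s, AEStronglyMeasurable (X i) μ)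
    (hX : ∀ i ∈ s, ∀ᵐ ω ∂μ, X i ω ∈ Set.Icc l L) :
    Var[fun ω ↦ 1 / (#s : ℝ) * ∑ i ∈ s, X i ω; μ]
      ≤ (L - l) ^ 2 / (4 * #s)
        + 1 / (#s : ℝ) ^ 2 * ∑ i ∈ s, ∑ j ∈ s.erase i, |cov[X i, X j; μ]| := by
  rw [variance_const_mul]
  calc (1 / (#s : ℝ)) ^ 2 * Var[fun ω ↦ ∑ i ∈ s, X i ω; μ]
      ≤ (1 / (#s : ℝ)) ^ 2
          * (#s * ((L - l) / 2) ^ 2 + ∑ i ∈ s, ∑ j ∈ s.erase i, |cov[X i, X j; μ]|) := by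
        gcongr
        exact variance_fun_sum_le hXm hX
    _ = _ := by
        rcases eq_or_ne (#s : ℝ) 0 with hs | hs
        · simp [hs]
        · field_simp
          ring

omit [IsProbabilityMeasure μ] in
theorem abs_covariance_const_mul_sum_le [IsFiniteMeasure μ] {Y : Ω → ℝ} (hY : MemLp Y 2 μ)
    (hX : ∀ i ∈ s, MemLp (X i) 2 μ) (c : ℝ) :
    |cov[Y, fun ω ↦ c * ∑ i ∈ s, X i ω; μ]| ≤ |c| * ∑ i ∈ s, |cov[Y, X i; μ]| := by
  rw [covariance_const_mul_right, covariance_fun_sum_right' hX hY, abs_mul]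
  gcongr
  exact abs_sum_le_sum_abs _ _

theorem abs_integral_div_integral_sub_integral_div_average_le [DecidableEq ι] (hs : s.Nonempty)
    {G : Ω → ℝ} {c τ τ₁ : ℝ} (hG : AEStronglyMeasurable G μ) (hGc : ∀ᵐ ω ∂μ, |G ω| ≤ c)
    (hXm : ∀ i ∈ s, AEStronglyMeasurable (X i) μ) (hl : 0 < l)
    (hX : ∀ i ∈ s, ∀ᵐ ω ∂μ, X i ω ∈ Set.Icc l L)
    (hweak : 1 / (#s : ℝ) ^ 2 * ∑ i ∈ s, ∑ j ∈ s.erase i, |cov[X i, X j; μ]| ≤ τ)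
    (hcross : 1 / (#s : ℝ) * ∑ i ∈ s, |cov[G, X i; μ]| ≤ τ₁) :
    |μ[G] / (∫ ω, 1 / (#s : ℝ) * ∑ i ∈ s, X i ω ∂μ)
        - ∫ ω, G ω / (1 / (#s : ℝ) * ∑ i ∈ s, X i ω) ∂μ|
      ≤ τ₁ / l ^ 2 + c / l ^ 3 * ((L - l) ^ 2 / (4 * #s) + τ) := by
  have hc : 0 ≤ c := by
    obtain ⟨ω, hω⟩ := hGc.exists
    exact (abs_nonneg _).trans hω
  have hXL2 : ∀ i ∈ s, MemLp (X i) 2 μ := fun i hi ↦ memLp_of_bounded (hX i hi) (hXm i hi) 2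
  have hGL2 : MemLp G 2 μ := .of_bound hG c (by simpa only [Real.norm_eq_abs] using hGc)
  have hXavg := ae_average_mem_Icc hs hX
  have hvar : Var[fun ω ↦ 1 / (#s : ℝ) * ∑ i ∈ s, X i ω; μ] ≤ (L - l) ^ 2 / (4 * #s) + τ :=
    (variance_average_le hXm hX).trans (add_le_add_right hweak _)
  have hcov : |cov[G, fun ω ↦ 1 / (#s : ℝ) * ∑ i ∈ s, X i ω; μ]| ≤ τ₁ := by
    refine (abs_covariance_const_mul_sum_le hGL2 hXL2 _).trans ?_
    rwa [abs_of_nonneg (by positivity)]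
  calc _ ≤ |cov[G, fun ω ↦ 1 / (#s : ℝ) * ∑ i ∈ s, X i ω; μ]| / l ^ 2
          + c * Var[fun ω ↦ 1 / (#s : ℝ) * ∑ i ∈ s, X i ω; μ] / l ^ 3 :=
        abs_integral_div_integral_sub_integral_div_le hG hGc
          (memLp_of_bounded hXavg ((aestronglyMeasurable_fun_sum s hXm).const_mul _) 2) hl
          (hXavg.mono fun _ h ↦ h.1)
    _ ≤ τ₁ / l ^ 2 + c / l ^ 3 * ((L - l) ^ 2 / (4 * #s) + τ) := by
        rw [mul_div_right_comm]
        gcongr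

end Averages

end ProbabilityTheory

section MeasureSpace

variable {Ω : Type*} [MeasureSpace Ω] [IsProbabilityMeasure (ℙ : Measure Ω)]

theorem covar_eq_covariance {U V : Ω → ℝ} (hU : MemLp U 2 ℙ) (hV : MemLp V 2 ℙ) :
    covar U V = cov[U, V; ℙ] := by
  rw [covariance_eq_sub hU hV]
  rfl

theorem eq_div_integral_average_mul_of_div_eq {ι : Type*} {s : Finset ι} (hs : s.Nonempty)
    {Y Y0 F : ι → Ω → ℝ} {y₀ f₀ l : ℝ} (hl : 0 < l) (hY : ∀ i ∈ s, Integrable (Y i) ℙ)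
    (hYl : ∀ i ∈ s, ∀ᵐ ω ∂ℙ, l ≤ Y i ω) (hcons : ∀ i ∈ s, Y i =ᵐ[ℙ] Y0 i)
    (h : y₀ / (∫ ω, ∑ i ∈ s, Y0 i ω) = f₀ / (∫ ω, ∑ i ∈ s, F i ω)) :
    y₀ = f₀ / (∫ ω, 1 / (#s : ℝ) * ∑ i ∈ s, F i ω)
      * ∫ ω, 1 / (#s : ℝ) * ∑ i ∈ s, Y i ω := by
  have hsum : ∫ ω, ∑ i ∈ s, Y0 i ω = ∫ ω, ∑ i ∈ s, Y i ω := by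
    refine integral_congr_ae ?_
    filter_upwards [(Filter.eventually_all_finset s).2 hcons] with ω h
    exact sum_congr rfl fun i hi ↦ (h i hi).symm
  have hpos : 0 < ∫ ω, ∑ i ∈ s, Y i ω := by
    rw [integral_finsetSum s hY]
    refine sum_pos (fun i hi ↦ hl.trans_le ?_) hs
    simpa using integral_mono_ae (integrable_const l) (hY i hi) (hYl i hi)
  rw [hsum, div_eq_iff hpos.ne'] at h
  rwa [integral_const_mul, integral_const_mul,
    div_mul_left_mul_mul_left (one_div_ne_zero (Nat.cast_ne_zero.2 hs.card_pos.ne'))]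

theorem abs_integral_sub_div_mul_sub_le {Y₁ G Φ Z : Ω → ℝ} {a c K B C : ℝ}
    (hY₁ : Integrable Y₁ ℙ) (hG : AEStronglyMeasurable G ℙ) (hGc : ∀ᵐ ω ∂ℙ, |G ω| ≤ c)
    (hΦ : AEStronglyMeasurable Φ ℙ) (ha : 0 < a) (hΦa : ∀ᵐ ω ∂ℙ, a ≤ Φ ω)
    (hZ : AEStronglyMeasurable Z ℙ) (hZK : ∀ᵐ ω ∂ℙ, |Z ω| ≤ K)
    (hB : |(∫ ω, G ω) / (∫ ω, Φ ω) - ∫ ω, G ω / Φ ω| ≤ B)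
    (hcov : |covar (fun ω ↦ G ω / Φ ω) Z| ≤ C) :
    |(∫ ω, (Y₁ ω - G ω / Φ ω * Z ω))
        - ((∫ ω, Y₁ ω) - (∫ ω, G ω) / (∫ ω, Φ ω) * ∫ ω, Z ω)| ≤ K * B + C := by
  simp only [← Real.norm_eq_abs] at hZK
  have hRZ : Integrable (fun ω ↦ G ω / Φ ω * Z ω) ℙ :=
    (Integrable.of_bound hZ K hZK).bdd_mul
      (hG.aemeasurable.div hΦ.aemeasurable).aestronglyMeasurable (ae_norm_div_le hGc ha hΦa)
  have hEZ : |∫ ω, Z ω| ≤ K := by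
    simpa using norm_integral_le_of_norm_le (integrable_const K) hZK
  rw [integral_sub hY₁ hRZ]
  calc _ = |((∫ ω, G ω) / (∫ ω, Φ ω) - ∫ ω, G ω / Φ ω) * (∫ ω, Z ω)
          - covar (fun ω ↦ G ω / Φ ω) Z| := by
        simp only [covar]
        congr 1
        ring
    _ ≤ |(∫ ω, G ω) / (∫ ω, Φ ω) - ∫ ω, G ω / Φ ω| * |∫ ω, Z ω|
          + |covar (fun ω ↦ G ω / Φ ω) Z| := by
        rw [← abs_mul]
        exact abs_sub _ _
    _ ≤ B * K + C :=
        add_le_add (mul_le_mul hB hEZ (abs_nonneg _) ((abs_nonneg _).trans hB)) hcov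
    _ = K * B + C := by ring

end MeasureSpace

theorem log_equiconfounding_bias_bound_improved_general
    {Ω : Type*} [MeasureSpace Ω] [IsProbabilityMeasure (ℙ : Measure Ω)]
    (J : ℕ) (hJ : 1 ≤ J)
    (Y Y0 F : ℕ → Ω → ℝ)
    (hYint : ∀ i ∈ Finset.Icc 1 (J + 1), Integrable (Y i) ℙ)
    (hFint : ∀ i ∈ Finset.Icc 1 (J + 1), Integrable (F i) ℙ)
    -- consistency
    (hcons : ∀ i ∈ Finset.Icc 2 (J + 1), Y i =ᵐ[ℙ] Y0 i)
    -- logarithmic equi-confounding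
    (hlogequi :
      (∫ ω, Y0 1 ω) / (∫ ω, ∑ i ∈ Finset.Icc 2 (J + 1), Y0 i ω)
        = (∫ ω, F 1 ω) / (∫ ω, ∑ i ∈ Finset.Icc 2 (J + 1), F i ω))
    -- boundedness
    (ly Ly lf Lf : ℝ) (hly : 0 < ly) (hlf : 0 < lf)
    (hY0bdd : ∀ i ∈ Finset.Icc 1 (J + 1), ∀ᵐ ω ∂ℙ, Y0 i ω ∈ Set.Icc ly Ly)
    (hFbdd : ∀ i ∈ Finset.Icc 1 (J + 1), ∀ᵐ ω ∂ℙ, F i ω ∈ Set.Icc lf Lf)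
    -- weak dependence among controls
    (τ : ℝ)
    (hweak : (1 / (J : ℝ) ^ 2) *
        ∑ i ∈ Finset.Icc 2 (J + 1), ∑ j ∈ (Finset.Icc 2 (J + 1)).erase i,
          |covar (F i) (F j)| ≤ τ)
    -- covariance condition on the ratio
    (C : ℝ)
    (hcov : |covar (fun ω => F 1 ω / ((1 / (J : ℝ)) * ∑ i ∈ Finset.Icc 2 (J + 1), F i ω))
        (fun ω => (1 / (J : ℝ)) * ∑ i ∈ Finset.Icc 2 (J + 1), Y i ω)| ≤ C)
    -- additional cross-covariance condition between target and control units
    (τ₁ : ℝ)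
    (hcross : (1 / (J : ℝ)) * ∑ i ∈ Finset.Icc 2 (J + 1), |covar (F 1) (F i)| ≤ τ₁) :
    |(∫ ω, (Y 1 ω - F 1 ω / (∑ i ∈ Finset.Icc 2 (J + 1), F i ω)
          * ∑ i ∈ Finset.Icc 2 (J + 1), Y i ω))
        - ((∫ ω, Y 1 ω) - ∫ ω, Y0 1 ω)|
      ≤ Ly * (τ₁ / lf ^ 2
          + ((Lf - lf) + Lf) / lf ^ 3 * ((Lf - lf) ^ 2 / (4 * J) + τ)) + C := by
  set s := Icc 2 (J + 1)
  have hs : s.Nonempty := nonempty_Icc.2 (by omega)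
  have hsub : s ⊆ Icc 1 (J + 1) := Icc_subset_Icc_left one_le_two
  have h1 : 1 ∈ Icc 1 (J + 1) := by simp
  have hFm i (hi : i ∈ Icc 1 (J + 1)) : AEStronglyMeasurable (F i) ℙ :=
    (hFint i hi).aestronglyMeasurable
  have hFL2 i (hi : i ∈ Icc 1 (J + 1)) : MemLp (F i) 2 ℙ :=
    memLp_of_bounded (hFbdd i hi) (hFm i hi) 2
  rw [sum_congr rfl fun i hi ↦ sum_congr rfl fun j hj ↦ congrArg abs
    (covar_eq_covariance (hFL2 i (hsub hi)) (hFL2 j (hsub (mem_of_mem_erase hj))))] at hweak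
  rw [sum_congr rfl fun i hi ↦ congrArg abs
    (covar_eq_covariance (hFL2 1 h1) (hFL2 i (hsub hi)))] at hcross
  rw [show (J : ℝ) = #s by simp [s]] at hweak hcross hcov ⊢
  have hYs : ∀ i ∈ s, ∀ᵐ ω ∂ℙ, Y i ω ∈ Set.Icc ly Ly := fun i hi ↦ by
    filter_upwards [hcons i hi, hY0bdd i (hsub hi)] with ω h h0
    rwa [h]
  have hYm i (hi : i ∈ s) : AEStronglyMeasurable (Y i) ℙ :=
    (hYint i (hsub hi)).aestronglyMeasurable
  have hF1 : ∀ᵐ ω ∂ℙ, |F 1 ω| ≤ (Lf - lf) + Lf := (hFbdd 1 h1).mono fun ω h ↦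
    abs_le.2 ⟨by linarith [h.1, h.2], by linarith [h.1, h.2]⟩
  simp_rw [div_sum_mul_sum_eq_div_average_mul_average hs]
  rw [eq_div_integral_average_mul_of_div_eq hs hly (fun i hi ↦ hYint i (hsub hi))
    (fun i hi ↦ (hYs i hi).mono fun _ h ↦ h.1) hcons hlogequi]
  refine abs_integral_sub_div_mul_sub_le (hYint 1 h1) (hFm 1 h1) hF1
    ((aestronglyMeasurable_fun_sum s fun i hi ↦ hFm i (hsub hi)).const_mul _) hlf
    ((ae_average_mem_Icc hs fun i hi ↦ hFbdd i (hsub hi)).mono fun _ h ↦ h.1)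
    ((aestronglyMeasurable_fun_sum s hYm).const_mul _)
    ((ae_average_mem_Icc hs hYs).mono fun _ h ↦ abs_le.2 ⟨by linarith [h.1, h.2], h.2⟩) ?_ hcov
  exact abs_integral_div_integral_sub_integral_div_average_le hs (hFm 1 h1) hF1
    (fun i hi ↦ hFm i (hsub hi)) hlf (fun i hi ↦ hFbdd i (hsub hi)) hweak hcross

/-- **Corollary 3.1 (improved bias bound for the logarithmic equi-confounding
estimator).** Under the assumptions of the logarithmic equi-confounding bias bound,
together with the additional cross-covariance condition
`(1/J)·Σ_{i=2}^{J+1} |Cov(F₁, Fᵢ)| ≤ τ₁`, the absolute bias of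
`ψ̂ᵉᑫ² = Y₁ − (F₁/Σ_{i=2}^{J+1} Fᵢ)·Σ_{i=2}^{J+1} Yᵢ` for `ψ₀ = E[Y₁] − E[Y₁⁽⁰⁾]`
is bounded by `L_y·(τ₁/l_f² + ((Δ_f + L_f)/l_f³)·(Δ_f²/(4J) + τ)) + C`. -/
theorem log_equiconfounding_bias_bound_improved
    {Ω : Type*} [MeasureSpace Ω] [IsProbabilityMeasure (ℙ : Measure Ω)]
    (J : ℕ) (hJ : 1 ≤ J)
    (Y Y0 F : ℕ → Ω → ℝ)
    (hYint : ∀ i ∈ Finset.Icc 1 (J + 1), Integrable (Y i) ℙ)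
    (hY0int : ∀ i ∈ Finset.Icc 1 (J + 1), Integrable (Y0 i) ℙ)
    (hFint : ∀ i ∈ Finset.Icc 1 (J + 1), Integrable (F i) ℙ)
    (hYmeas : ∀ i ∈ Finset.Icc 1 (J + 1), Measurable (Y i))
    (hFmeas : ∀ i ∈ Finset.Icc 1 (J + 1), Measurable (F i))
    -- consistency
    (hcons : ∀ i ∈ Finset.Icc 2 (J + 1), Y i =ᵐ[ℙ] Y0 i)
    -- logarithmic equi-confounding
    (hlogequi :
      (∫ ω, Y0 1 ω) / (∫ ω, ∑ i ∈ Finset.Icc 2 (J + 1), Y0 i ω)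
        = (∫ ω, F 1 ω) / (∫ ω, ∑ i ∈ Finset.Icc 2 (J + 1), F i ω))
    -- boundedness
    (ly Ly lf Lf : ℝ) (hly : 0 < ly) (hlf : 0 < lf)
    (hY0bdd : ∀ i ∈ Finset.Icc 1 (J + 1), ∀ᵐ ω ∂ℙ, Y0 i ω ∈ Set.Icc ly Ly)
    (hFbdd : ∀ i ∈ Finset.Icc 1 (J + 1), ∀ᵐ ω ∂ℙ, F i ω ∈ Set.Icc lf Lf)
    -- weak dependence among controls
    (τ : ℝ) (hτ : 0 ≤ τ)
    (hweak : (1 / (J : ℝ) ^ 2) *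
        ∑ i ∈ Finset.Icc 2 (J + 1), ∑ j ∈ (Finset.Icc 2 (J + 1)).erase i,
          |covar (F i) (F j)| ≤ τ)
    -- covariance condition on the ratio
    (C : ℝ) (hC : 0 ≤ C)
    (hcov : |covar (fun ω => F 1 ω / ((1 / (J : ℝ)) * ∑ i ∈ Finset.Icc 2 (J + 1), F i ω))
        (fun ω => (1 / (J : ℝ)) * ∑ i ∈ Finset.Icc 2 (J + 1), Y i ω)| ≤ C)
    -- additional cross-covariance condition between target and control units
    (τ₁ : ℝ) (hτ₁ : 0 ≤ τ₁)
    (hcross : (1 / (J : ℝ)) * ∑ i ∈ Finset.Icc 2 (J + 1), |covar (F 1) (F i)| ≤ τ₁) :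
    |(∫ ω, (Y 1 ω - F 1 ω / (∑ i ∈ Finset.Icc 2 (J + 1), F i ω)
          * ∑ i ∈ Finset.Icc 2 (J + 1), Y i ω))
        - ((∫ ω, Y 1 ω) - ∫ ω, Y0 1 ω)|
      ≤ Ly * (τ₁ / lf ^ 2
          + ((Lf - lf) + Lf) / lf ^ 3 * ((Lf - lf) ^ 2 / (4 * J) + τ)) + C :=
  log_equiconfounding_bias_bound_improved_general J hJ Y Y0 F hYint hFint hcons hlogequi ly Ly lf Lf
    hly hlf hY0bdd hFbdd τ hweak C hcov τ₁ hcross
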